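/- Let S ⊆ X_1 × ⋯ × X_k be a k-way index set, let j ∈ {1,…,k}, let a ⊆ {1,…,k} with j ∈ a, and let b = ({1,…,k} \ a) ∪ {j}. Then S is a coordinate toric fiber product along coordinate j with respect to the split (a,b) if and only if both of the following frequency conditions hold: (i) for every A ∈ π_a(S), the number of elements s ∈ S with π_a(s) = A equals the number of distinct elements B ∈ π_b(S) whose j-th coordinate equals the j-th coordinate of A; and (ii) for every B ∈ π_b(S), the number of elements s ∈ S with π_b(s) = B equals the number of distinct elements A ∈ π_a(S) whose j-th coordinate equals the j-th coordinate of B. -/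
import Mathlib


/-- `S ⊆ X_1 × ⋯ × X_k` is a *coordinate toric fiber product* with respect to the pair of
coordinate sets `(a, b)` if `S = { s | π_a(s) ∈ π_a(S) and π_b(s) ∈ π_b(S) }`. -/
def isCTFP {k : ℕ} {X : Fin k → Type*} (S : Finset (∀ i, X i)) (a b : Finset (Fin k)) : Prop :=
  ∀ s : ∀ i, X i, s ∈ S ↔
    ((∃ t ∈ S, ∀ i ∈ a, s i = t i) ∧ (∃ u ∈ S, ∀ i ∈ b, s i = u i))

/-- The projection `π_a` of a tuple to the coordinates in `a`. -/
def restrictTo {k : ℕ} {X : Fin k → Type*} (a : Finset (Fin k)) (s : ∀ i, X i) :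
    ∀ i : {x // x ∈ a}, X i.1 := fun i => s i.1

section aux
variable {k : ℕ} {X : Fin k → Type*}

lemma ext_of_restrict {a b : Finset (Fin k)} (hcov : ∀ i, i ∈ a ∨ i ∈ b)
    {s t : ∀ i, X i} (ha : restrictTo a s = restrictTo a t)
    (hb : restrictTo b s = restrictTo b t) : s = t := by
  funext i
  rcases hcov i with h | h
  · exact congrFun ha ⟨i, h⟩
  · exact congrFun hb ⟨i, h⟩

lemma exists_glue {a b : Finset (Fin k)} {j : Fin k}
    (hint : ∀ i, i ∈ b → i ∈ a → i = j)
    {S : Finset (∀ i, X i)} (hS : isCTFP S a b)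
    {t u : ∀ i, X i} (ht : t ∈ S) (hu : u ∈ S) (hj : t j = u j) :
    ∃ s ∈ S, restrictTo a s = restrictTo a t ∧ restrictTo b s = restrictTo b u := by
  classical
  set s : ∀ i, X i := fun i => if h : i ∈ a then t i else u i with hs
  have hA : ∀ i ∈ a, s i = t i := fun i hi => dif_pos hi
  have hB : ∀ i ∈ b, s i = u i := by
    intro i hi
    by_cases h : i ∈ a
    · have hij := hint i hi h; subst hij
      simp only [s, dif_pos h]; exact hj
    · exact dif_neg h
  refine ⟨s, (hS s).2 ⟨⟨t, ht, hA⟩, ⟨u, hu, hB⟩⟩, ?_, ?_⟩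
  · funext i; exact hA i.1 i.2
  · funext i; exact hB i.1 i.2

lemma count_eq [∀ i, DecidableEq (X i)] {a b : Finset (Fin k)} {j : Fin k}
    (hja : j ∈ a) (hjb : j ∈ b) (hcov : ∀ i, i ∈ a ∨ i ∈ b)
    {S : Finset (∀ i, X i)}
    (hglue : ∀ t ∈ S, ∀ u ∈ S, t j = u j →
        ∃ s ∈ S, restrictTo a s = restrictTo a t ∧ restrictTo b s = restrictTo b u)
    {A} (hA : A ∈ S.image (restrictTo a)) :
    (S.filter fun s => restrictTo a s = A).card =
      ((S.image (restrictTo b)).filter fun B => B ⟨j, hjb⟩ = A ⟨j, hja⟩).card := by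
  classical
  obtain ⟨t, ht, rfl⟩ := Finset.mem_image.mp hA
  apply Finset.card_bij (fun s _ => restrictTo b s)
  · intro s hs
    rw [Finset.mem_filter] at hs ⊢
    refine ⟨Finset.mem_image_of_mem _ hs.1, ?_⟩
    have := congrFun hs.2 ⟨j, hja⟩
    exact this
  · intro s hs s' hs' h
    rw [Finset.mem_filter] at hs hs'
    exact ext_of_restrict hcov (hs.2.trans hs'.2.symm) h
  · intro B hB
    rw [Finset.mem_filter] at hB
    obtain ⟨u, hu, rfl⟩ := Finset.mem_image.mp hB.1
    obtain ⟨s, hsS, hsa, hsb⟩ := hglue t ht u hu hB.2.symm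
    exact ⟨s, Finset.mem_filter.mpr ⟨hsS, hsa⟩, hsb⟩

end aux

/-- `S` is a cTFP along coordinate `j` with respect to the `j`-coordinate split
`(a, b)`, with `b = (univ \ a) ∪ {j}`, if and only if: (i) for each `A ∈ π_a(S)`, the number of
`s ∈ S` with `π_a(s) = A` equals the number of distinct `B ∈ π_b(S)` whose `j`-th coordinate
equals that of `A`; and (ii) symmetrically with the roles of `a` and `b` exchanged. -/
theorem stmt1 {k : ℕ} {X : Fin k → Type*} [∀ i, DecidableEq (X i)]
    (S : Finset (∀ i, X i)) (j : Fin k) (a : Finset (Fin k)) (hja : j ∈ a) :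
    isCTFP S a ((Finset.univ \ a) ∪ {j}) ↔
      ((∀ A ∈ S.image (restrictTo a),
          (S.filter fun s => restrictTo a s = A).card =
            ((S.image (restrictTo ((Finset.univ \ a) ∪ {j}))).filter fun B =>
              B ⟨j, Finset.mem_union_right _ (Finset.mem_singleton_self j)⟩
                = A ⟨j, hja⟩).card) ∧
       (∀ B ∈ S.image (restrictTo ((Finset.univ \ a) ∪ {j})),
          (S.filter fun s => restrictTo ((Finset.univ \ a) ∪ {j}) s = B).card =
            ((S.image (restrictTo a)).filter fun A =>
              A ⟨j, hja⟩
                = B ⟨j, Finset.mem_union_right _ (Finset.mem_singleton_self j)⟩).card)) := by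
  classical
  set b : Finset (Fin k) := (Finset.univ \ a) ∪ {j} with hb
  have hjb : j ∈ b := Finset.mem_union_right _ (Finset.mem_singleton_self j)
  have hcov : ∀ i : Fin k, i ∈ a ∨ i ∈ b := by
    intro i
    by_cases h : i ∈ a
    · exact Or.inl h
    · exact Or.inr (Finset.mem_union_left _ (by simp [h]))
  have hint : ∀ i, i ∈ b → i ∈ a → i = j := by
    intro i hib hia
    rcases Finset.mem_union.mp hib with h | h
    · exact absurd hia (Finset.mem_sdiff.mp h).2
    · exact Finset.mem_singleton.mp h
  constructor
  · intro hS
    constructor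
    · intro A hA
      exact count_eq hja hjb hcov
        (fun t ht u hu hj => exists_glue hint hS ht hu hj) hA
    · intro B hB
      have hS' : isCTFP S b a := fun s => (hS s).trans and_comm
      exact count_eq hjb hja (fun i => (hcov i).symm)
        (fun t ht u hu hj => exists_glue (fun i hia hib => hint i hib hia) hS' ht hu hj) hB
  · rintro ⟨h1, -⟩
    intro s
    constructor
    · intro hs
      exact ⟨⟨s, hs, fun _ _ => rfl⟩, ⟨s, hs, fun _ _ => rfl⟩⟩
    · rintro ⟨⟨t, ht, hta⟩, ⟨u, hu, hub⟩⟩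
      have hAmem : restrictTo a s ∈ S.image (restrictTo a) := by
        refine Finset.mem_image.mpr ⟨t, ht, ?_⟩
        funext i; exact (hta i.1 i.2).symm
      have hcard := h1 _ hAmem
      set A := restrictTo a s with hA
      set fib := S.filter fun s' => restrictTo a s' = A with hfib
      have hinj : Set.InjOn (restrictTo (X := X) b) (fib : Set (∀ i, X i)) := by
        intro x hx y hy hxy
        rw [Finset.mem_coe, Finset.mem_filter] at hx hy
        exact ext_of_restrict hcov (hx.2.trans hy.2.symm) hxy
      have hsub : fib.image (restrictTo b) ⊆
          (S.image (restrictTo b)).filter fun B => B ⟨j, hjb⟩ = A ⟨j, hja⟩ := by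
        intro B hB
        obtain ⟨x, hx, rfl⟩ := Finset.mem_image.mp hB
        rw [Finset.mem_filter] at hx
        refine Finset.mem_filter.mpr ⟨Finset.mem_image_of_mem _ hx.1, ?_⟩
        exact congrFun hx.2 ⟨j, hja⟩
      have hcardimg : (fib.image (restrictTo b)).card = fib.card :=
        Finset.card_image_of_injOn hinj
      have heq : fib.image (restrictTo b) =
          (S.image (restrictTo b)).filter fun B => B ⟨j, hjb⟩ = A ⟨j, hja⟩ :=
        Finset.eq_of_subset_of_card_le hsub (by rw [hcardimg, ← hcard])
      have hBmem : restrictTo b s ∈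
          (S.image (restrictTo b)).filter fun B => B ⟨j, hjb⟩ = A ⟨j, hja⟩ := by
        refine Finset.mem_filter.mpr ⟨?_, rfl⟩
        refine Finset.mem_image.mpr ⟨u, hu, ?_⟩
        funext i; exact (hub i.1 i.2).symm
      rw [← heq] at hBmem
      obtain ⟨x, hx, hxB⟩ := Finset.mem_image.mp hBmem
      rw [Finset.mem_filter] at hx
      have : x = s := ext_of_restrict hcov (hx.2.trans rfl) hxB
      exact this ▸ hx.1
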